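/- Let n ≥ 9 be an integer, let μ = μ₂(𝔏(Q'_n)) be the second-smallest eigenvalue of 𝔏(Q'_n), and let v = (v₁,…,v_n)ᵀ be an eigenvector of 𝔏(Q'_n) with eigenvalue μ. Then (n−μ)(n−1−μ) − (n−2)² > n/2 and ((n−μ)(n−1−μ) − (n−2)²)·(v₂ − v₁) = μ·v₃. -/

import Mathlib

open Matrix

/-- The ascending sorted list of eigenvalues (with multiplicity) of a real
symmetric (Hermitian) matrix; junk value `[]` otherwise. -/
noncomputable def eigsList {m : Type*} [Fintype m] [DecidableEq m]
    (M : Matrix m m ℝ) : List ℝ :=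
  if h : M.IsHermitian then Multiset.sort (Finset.univ.val.map h.eigenvalues) (· ≤ ·)
  else []

/-- The `k`-th largest eigenvalue (1-indexed, counted with multiplicity). -/
noncomputable def kthLargest {m : Type*} [Fintype m] [DecidableEq m]
    (M : Matrix m m ℝ) (k : ℕ) : ℝ :=
  (eigsList M).getD (Fintype.card m - k) 0

/-- The `k`-th smallest eigenvalue (1-indexed, counted with multiplicity). -/
noncomputable def kthSmallest {m : Type*} [Fintype m] [DecidableEq m]
    (M : Matrix m m ℝ) (k : ℕ) : ℝ :=
  (eigsList M).getD (k - 1) 0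

/-- The Laplacian `𝔏(M) = diag(M·1) − M`. -/
noncomputable def Lap {n : ℕ} (M : Matrix (Fin n) (Fin n) ℝ) : Matrix (Fin n) (Fin n) ℝ :=
  Matrix.diagonal (fun i => ∑ j, M i j) - M

/-- The matrix `Q_n` (1-indexed description, realized on `Fin n`). -/
noncomputable def Qmat (n : ℕ) : Matrix (Fin n) (Fin n) ℝ := fun i j =>
  let d := ((i.val : ℤ) - (j.val : ℤ)).natAbs
  if d = 0 then
    (if i.val = 0 ∨ i.val = n - 1 then ((n : ℝ) ^ 2 - n - 6) / 2
     else if i.val = 1 ∨ i.val = n - 2 then ((n : ℝ) ^ 2 - 3 * n - 2) / 2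
     else ((n : ℝ) ^ 2 - 3 * n - 6) / 2)
  else if d = 1 then (n : ℝ) - 2
  else if d = 2 then 2
  else 0

/-- The matrix `Q'_n` (1-indexed description, realized on `Fin n`). -/
noncomputable def Qp (n : ℕ) : Matrix (Fin n) (Fin n) ℝ := fun i j =>
  let a := i.val + 1
  let b := j.val + 1
  if (a = 1 ∧ b = 2) ∨ (a = 2 ∧ b = 1) then (n : ℝ) - 2
  else if (a = 1 ∧ b = 3) ∨ (a = 3 ∧ b = 1) then 2
  else if a = 2 ∧ b = 2 then 1
  else if (a = 2 ∧ b = 3) ∨ (a = 3 ∧ b = 2) then 1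
  else if a = 3 ∧ b = 3 then (n : ℝ) - 4
  else if (3 ≤ a ∧ a ≤ n - 1 ∧ b = a + 1) ∨ (3 ≤ b ∧ b ≤ n - 1 ∧ a = b + 1) then 1
  else if a = b ∧ 4 ≤ a ∧ a ≤ n - 1 then (n : ℝ) - 2
  else if a = n ∧ b = n then (n : ℝ) - 1
  else 0

/-!
Rows 1 and 2 of `𝔏(Q'_n)` both have row sum `n` and involve only `v₁, v₂, v₃`, so the identity is
a linear combination of the two corresponding eigen-equations. For the inequality it suffices that
`μ ≤ n / (n - 1) ≤ 9 / 8`. This is Courant–Fischer: `μ₂` is at most the largest Rayleigh quotient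
on any plane, since the plane contains a nonzero vector orthogonal to an eigenvector of `μ₁`.
On the plane spanned by `𝟙` and `e_n` the Laplacian's quadratic form is `b²` at `a𝟙 + b e_n`,
whose squared norm `n a² + 2ab + b²` is at least `(n - 1) / n · b²`.
-/

namespace Matrix.IsHermitian

variable {m : Type*} [Fintype m] [DecidableEq m] {A : Matrix m m ℝ}

theorem eigsList_eq (hA : A.IsHermitian) : eigsList A = (List.ofFn hA.eigenvalues₀).reverse := by
  have hmap : Finset.univ.val.map hA.eigenvalues = ↑(List.ofFn hA.eigenvalues₀).reverse := by
    rw [Multiset.coe_reverse, ← Fin.univ_val_map, ← Multiset.map_univ_val_equiv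
      (Fintype.equivOfCardEq (Fintype.card_fin _)), Multiset.map_map]
    congr 1
    ext i
    simp [eigenvalues]
  rw [eigsList, dif_pos hA, hmap, Multiset.coe_sort]
  apply List.mergeSort_of_pairwise
  simpa [List.pairwise_reverse] using hA.eigenvalues₀_antitone.sortedGE_ofFn.pairwise

theorem kthSmallest_eq (hA : A.IsHermitian) {k : ℕ} (hk : 1 ≤ k) (hkm : k ≤ Fintype.card m) :
    kthSmallest A k = hA.eigenvalues₀ ⟨Fintype.card m - k, by omega⟩ := by
  rw [kthSmallest, hA.eigsList_eq, List.getD_eq_getElem _ _ (by simp; omega),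
    List.getElem_reverse, List.getElem_ofFn]
  congr 2
  simp
  omega

theorem exists_forall_ne_kthSmallest_two_le (hA : A.IsHermitian) (hm : 2 ≤ Fintype.card m) :
    ∃ i₀, ∀ j ≠ i₀, kthSmallest A 2 ≤ hA.eigenvalues j := by
  set e := Fintype.equivOfCardEq (α := Fin (Fintype.card m)) (Fintype.card_fin _)
  refine ⟨e ⟨Fintype.card m - 1, by omega⟩, fun j hj => ?_⟩
  rw [hA.kthSmallest_eq one_le_two hm]
  apply hA.eigenvalues₀_antitone
  change e.symm j ≤ _
  have hval : (e.symm j : ℕ) ≠ Fintype.card m - 1 := fun h =>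
    hj (by rw [← e.apply_symm_apply j]; exact congrArg e (Fin.ext h))
  have := (e.symm j).isLt
  rw [Fin.le_def]
  dsimp only
  omega

theorem dotProduct_self_eq_sum (hA : A.IsHermitian) (w : m → ℝ) :
    w ⬝ᵥ w = ∑ i, (⇑(hA.eigenvectorBasis i) ⬝ᵥ w) ^ 2 := by
  have := hA.eigenvectorBasis.sum_inner_mul_inner (WithLp.toLp 2 w) (WithLp.toLp 2 w)
  simp only [EuclideanSpace.inner_eq_star_dotProduct, star_trivial] at this
  rw [← this]
  simp [dotProduct_comm, sq]

theorem dotProduct_mulVec_eq_sum (hA : A.IsHermitian) (w : m → ℝ) :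
    w ⬝ᵥ (A *ᵥ w) = ∑ i, hA.eigenvalues i * (⇑(hA.eigenvectorBasis i) ⬝ᵥ w) ^ 2 := by
  have := hA.eigenvectorBasis.sum_inner_mul_inner (WithLp.toLp 2 w) (WithLp.toLp 2 (A *ᵥ w))
  simp only [EuclideanSpace.inner_eq_star_dotProduct, star_trivial] at this
  have hsymm (i : m) : A *ᵥ w ⬝ᵥ ⇑(hA.eigenvectorBasis i) =
      hA.eigenvalues i * (⇑(hA.eigenvectorBasis i) ⬝ᵥ w) := by
    rw [dotProduct_comm, dotProduct_mulVec, ← mulVec_transpose,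
      ← conjTranspose_eq_transpose_of_trivial, hA.eq, mulVec_eigenvectorBasis, smul_dotProduct,
      smul_eq_mul]
  rw [dotProduct_comm, ← this]
  refine Finset.sum_congr rfl fun i _ => ?_
  rw [hsymm]
  ring

theorem exists_kthSmallest_two_mul_dotProduct_self_le (hA : A.IsHermitian)
    (hm : 2 ≤ Fintype.card m) :
    ∃ u : m → ℝ, ∀ w, u ⬝ᵥ w = 0 → kthSmallest A 2 * (w ⬝ᵥ w) ≤ w ⬝ᵥ (A *ᵥ w) := by
  obtain ⟨i₀, hi₀⟩ := hA.exists_forall_ne_kthSmallest_two_le hm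
  refine ⟨hA.eigenvectorBasis i₀, fun w hw => ?_⟩
  rw [hA.dotProduct_self_eq_sum, hA.dotProduct_mulVec_eq_sum, Finset.mul_sum]
  refine Finset.sum_le_sum fun j _ => ?_
  rcases eq_or_ne j i₀ with rfl | hj
  · simp [hw]
  · exact mul_le_mul_of_nonneg_right (hi₀ j hj) (sq_nonneg _)

theorem kthSmallest_two_le_of_linearIndependent (hA : A.IsHermitian) {x y : m → ℝ}
    (hxy : LinearIndependent ℝ ![x, y]) {c : ℝ}
    (h : ∀ a b : ℝ, (a • x + b • y) ⬝ᵥ (A *ᵥ (a • x + b • y)) ≤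
      c * ((a • x + b • y) ⬝ᵥ (a • x + b • y))) :
    kthSmallest A 2 ≤ c := by
  have hm : 2 ≤ Fintype.card m := by
    simpa using hxy.fintype_card_le_finrank
  obtain ⟨u, hu⟩ := hA.exists_kthSmallest_two_mul_dotProduct_self_le hm
  obtain ⟨a, b, hab, hperp⟩ : ∃ a b : ℝ, (a, b) ≠ (0, 0) ∧ u ⬝ᵥ (a • x + b • y) = 0 := by
    by_cases hx : u ⬝ᵥ x = 0
    · exact ⟨1, 0, by simp, by simp [hx]⟩
    · refine ⟨u ⬝ᵥ y, -(u ⬝ᵥ x), by simp [hx], ?_⟩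
      simp only [dotProduct_add, dotProduct_smul, smul_eq_mul]
      ring
  set w := a • x + b • y
  have hw : w ≠ 0 := fun hw => hab (by
    obtain ⟨rfl, rfl⟩ := LinearIndependent.pair_iff.mp hxy a b hw
    rfl)
  have hpos : 0 < w ⬝ᵥ w :=
    lt_of_le_of_ne (Finset.sum_nonneg fun i _ => mul_self_nonneg (w i))
      (Ne.symm (dotProduct_self_eq_zero.not.mpr hw))
  exact le_of_mul_le_mul_right ((hu w hperp).trans (h a b)) hpos

end Matrix.IsHermitian

section Laplacian

variable {n : ℕ} (M : Matrix (Fin n) (Fin n) ℝ)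

theorem lap_mulVec_apply (v : Fin n → ℝ) (i : Fin n) :
    (Lap M *ᵥ v) i = ∑ j, M i j * (v i - v j) := by
  rw [Lap, sub_mulVec, Pi.sub_apply, mulVec_diagonal, Finset.sum_mul]
  simp only [mulVec, dotProduct, mul_sub, Finset.sum_sub_distrib]

theorem lap_mulVec_one : Lap M *ᵥ 1 = 0 := by
  ext i
  simp [lap_mulVec_apply]

variable {M}

theorem isHermitian_lap (hM : M.IsSymm) : (Lap M).IsHermitian := by
  rw [isHermitian_iff_isSymm]
  simp only [Lap, IsSymm, transpose_sub, diagonal_transpose, hM.eq]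

theorem dotProduct_lap_mulVec_smul_one_add (hM : M.IsSymm) (a : ℝ) (y : Fin n → ℝ) :
    (a • 1 + y) ⬝ᵥ (Lap M *ᵥ (a • 1 + y)) = y ⬝ᵥ (Lap M *ᵥ y) := by
  have h : (1 : Fin n → ℝ) ᵥ* Lap M = 0 := by
    rw [← mulVec_transpose, (isHermitian_iff_isSymm.mp (isHermitian_lap hM)).eq, lap_mulVec_one]
  rw [mulVec_add, mulVec_smul, lap_mulVec_one, smul_zero, zero_add, add_dotProduct,
    smul_dotProduct, dotProduct_mulVec, h, zero_dotProduct, smul_zero, zero_add]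

end Laplacian

section Qp

variable {n : ℕ} (hn : 4 ≤ n) (j : Fin n) (v : Fin n → ℝ)

theorem qp_isSymm : (Qp n).IsSymm := by
  ext i j
  simp only [transpose_apply, Qp]
  repeat' apply if_congr
  all_goals first | rfl | omega

theorem qp_zero_apply :
    Qp n ⟨0, by omega⟩ j = if j.val = 1 then (n : ℝ) - 2 else if j.val = 2 then 2 else 0 := by
  dsimp only [Qp]
  split_ifs <;> first | rfl | omega

theorem qp_one_apply :
    Qp n ⟨1, by omega⟩ j =
      if j.val = 0 then (n : ℝ) - 2 else if j.val = 1 then 1 else if j.val = 2 then 1 else 0 := by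
  dsimp only [Qp]
  split_ifs <;> first | rfl | omega

theorem qp_last_apply :
    Qp n ⟨n - 1, by omega⟩ j =
      if j.val = n - 2 then 1 else if j.val = n - 1 then (n : ℝ) - 1 else 0 := by
  dsimp only [Qp]
  split_ifs <;> first | rfl | omega

theorem lap_qp_mulVec_zero :
    (Lap (Qp n) *ᵥ v) ⟨0, by omega⟩ =
      ((n : ℝ) - 2) * (v ⟨0, by omega⟩ - v ⟨1, by omega⟩) +
        2 * (v ⟨0, by omega⟩ - v ⟨2, by omega⟩) := by
  rw [lap_mulVec_apply,
    Fintype.sum_eq_add ⟨1, by omega⟩ ⟨2, by omega⟩ (Fin.ne_of_val_ne (by norm_num))]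
  · simp [qp_zero_apply hn]
  · rintro j ⟨h1, h2⟩
    rw [qp_zero_apply hn, if_neg (Fin.val_ne_of_ne h1), if_neg (Fin.val_ne_of_ne h2), zero_mul]

theorem lap_qp_mulVec_one :
    (Lap (Qp n) *ᵥ v) ⟨1, by omega⟩ =
      ((n : ℝ) - 2) * (v ⟨1, by omega⟩ - v ⟨0, by omega⟩) +
        (v ⟨1, by omega⟩ - v ⟨2, by omega⟩) := by
  rw [lap_mulVec_apply,
    Fintype.sum_eq_add ⟨0, by omega⟩ ⟨2, by omega⟩ (Fin.ne_of_val_ne (by norm_num))]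
  · simp [qp_one_apply hn]
  · rintro j ⟨h0, h2⟩
    rcases eq_or_ne j ⟨1, by omega⟩ with rfl | h1
    · simp
    rw [qp_one_apply hn, if_neg (Fin.val_ne_of_ne h0), if_neg (Fin.val_ne_of_ne h1),
      if_neg (Fin.val_ne_of_ne h2), zero_mul]

theorem lap_qp_mulVec_last :
    (Lap (Qp n) *ᵥ v) ⟨n - 1, by omega⟩ = v ⟨n - 1, by omega⟩ - v ⟨n - 2, by omega⟩ := by
  rw [lap_mulVec_apply, Fintype.sum_eq_single ⟨n - 2, by omega⟩]
  · simp [qp_last_apply hn]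
  · intro j h2
    rcases eq_or_ne j ⟨n - 1, by omega⟩ with rfl | h1
    · simp
    rw [qp_last_apply hn, if_neg (Fin.val_ne_of_ne h2), if_neg (Fin.val_ne_of_ne h1), zero_mul]

end Qp

theorem kthSmallest_lap_qp_two_le {n : ℕ} (hn : 4 ≤ n) :
    kthSmallest (Lap (Qp n)) 2 ≤ (n : ℝ) / (n - 1) := by
  let e : Fin n → ℝ := Pi.single ⟨n - 1, by omega⟩ 1
  have hindep : LinearIndependent ℝ ![1, e] := by
    refine LinearIndependent.pair_iff.mpr fun s t hst => ?_
    have h0 := congrFun hst ⟨0, by omega⟩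
    have hlast := congrFun hst ⟨n - 1, by omega⟩
    simp only [Pi.add_apply, Pi.smul_apply, Pi.one_apply, Pi.zero_apply, smul_eq_mul, e,
      Pi.single_eq_same, Pi.single_apply, Fin.ext_iff] at h0 hlast
    rw [if_neg (by omega)] at h0
    constructor <;> linarith
  have hquad (b : ℝ) : (b • e) ⬝ᵥ (Lap (Qp n) *ᵥ (b • e)) = b ^ 2 := by
    rw [smul_dotProduct, single_dotProduct, lap_qp_mulVec_last hn]
    simp [e, Fin.ext_iff, show n - 2 ≠ n - 1 by omega, sq]
  refine (isHermitian_lap (qp_isSymm)).kthSmallest_two_le_of_linearIndependent hindep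
    fun a b => ?_
  have hnorm : (a • 1 + b • e) ⬝ᵥ (a • 1 + b • e) = n * a ^ 2 + 2 * a * b + b ^ 2 := by
    simp only [add_dotProduct, dotProduct_add, smul_dotProduct, dotProduct_smul, smul_eq_mul,
      e, single_dotProduct, dotProduct_single, one_dotProduct_one]
    simp only [Fintype.card_fin, Pi.one_apply, mul_one, Pi.add_apply, Pi.smul_apply, smul_eq_mul,
      Pi.single_eq_same]
    ring
  have hn1 : (1 : ℝ) < n := by norm_cast; omega
  rw [dotProduct_lap_mulVec_smul_one_add (qp_isSymm), hquad, hnorm, div_mul_eq_mul_div,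
    le_div_iff₀ (by linarith)]
  nlinarith [sq_nonneg (n * a + b)]

theorem stmt15 (n : ℕ) (hn : 9 ≤ n) (mu : ℝ) (hmu : mu = kthSmallest (Lap (Qp n)) 2)
    (v : Fin n → ℝ) (hev : Lap (Qp n) *ᵥ v = mu • v) :
    ((n : ℝ) - mu) * ((n : ℝ) - 1 - mu) - ((n : ℝ) - 2) ^ 2 > (n : ℝ) / 2 ∧
      (((n : ℝ) - mu) * ((n : ℝ) - 1 - mu) - ((n : ℝ) - 2) ^ 2) *
          (v ⟨1, by omega⟩ - v ⟨0, by omega⟩) = mu * v ⟨2, by omega⟩ := by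
  have hn9 : (9 : ℝ) ≤ n := by exact_mod_cast hn
  have hmu_le : mu ≤ 9 / 8 := by
    have : mu * (n - 1) ≤ n := by
      rw [← le_div_iff₀ (by linarith), hmu]
      exact kthSmallest_lap_qp_two_le (by omega)
    nlinarith
  have h0 := congrFun hev ⟨0, by omega⟩
  have h1 := congrFun hev ⟨1, by omega⟩
  rw [lap_qp_mulVec_zero (by omega), Pi.smul_apply, smul_eq_mul] at h0
  rw [lap_qp_mulVec_one (by omega), Pi.smul_apply, smul_eq_mul] at h1
  refine ⟨?_, by linear_combination (mu - 1) * h0 + (2 - mu) * h1⟩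
  nlinarith [mul_nonneg (sub_nonneg.mpr hmu_le)
    (show 0 ≤ 2 * (n : ℝ) - 1 - 9 / 8 - mu by linarith)]
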